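/- arXiv:1010.3125 — 2 statements merged into one kernel-verified Lean document; each statement's English description precedes it below -/
import Mathlib

section
/- Given antisymmetric invertible J₀ with J₀² = -I, the general solution a of the equation aJ₀ + J₀aᵀ + bJbᵀ = 0 (with J antisymmetric) is a = J₀R + bJbᵀJ₀/2 where R ranges over symmetric matrices; moreover the two summands are orthogonal in the Frobenius inner product (J₀R is Hamiltonian and bJbᵀJ₀/2 is skew-Hamiltonian). -/
open Matrix

private lemma trace_symm_anti {n : ℕ} (R T : Matrix (Fin n) (Fin n) ℝ)
    (hR : Rᵀ = R) (hT : Tᵀ = -T) : (R * T).trace = 0 := by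
  have h : (R * T).trace = ((R * T)ᵀ).trace := (Matrix.trace_transpose _).symm
  rw [Matrix.transpose_mul, hR, hT, Matrix.neg_mul, Matrix.trace_neg,
    Matrix.trace_mul_comm] at h
  rw [Matrix.trace_mul_comm]
  linarith

private lemma fwd_dir {n : ℕ} (J₀ S a : Matrix (Fin n) (Fin n) ℝ)
    (hJ₀ : J₀ᵀ = -J₀) (hJ₀2 : J₀ * J₀ = -1) (hS : Sᵀ = -S)
    (h : a * J₀ + J₀ * aᵀ + S = 0) :
    ∃ R : Matrix (Fin n) (Fin n) ℝ, Rᵀ = R ∧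
      a = J₀ * R + (1/2 : ℝ) • (S * J₀) := by
  have hT : (J₀ * (S * J₀))ᵀ = -(J₀ * (S * J₀)) := by
    rw [Matrix.transpose_mul, Matrix.transpose_mul, hJ₀, hS]
    simp [Matrix.mul_assoc]
  have h2 : J₀ * ((a * J₀ + J₀ * aᵀ + S) * J₀) = 0 := by rw [h]; simp
  have he : J₀ * ((a * J₀ + J₀ * aᵀ + S) * J₀) =
      J₀ * a * (J₀ * J₀) + (J₀ * J₀) * (aᵀ * J₀) + J₀ * (S * J₀) := by
    noncomm_ring
  rw [he, hJ₀2, mul_neg_one, neg_one_mul] at h2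
  have h3 : J₀ * (S * J₀) = J₀ * a + aᵀ * J₀ := by
    rw [eq_comm, ← sub_eq_zero,
      show J₀ * a + aᵀ * J₀ - J₀ * (S * J₀)
        = -(-(J₀ * a) + -(aᵀ * J₀) + J₀ * (S * J₀)) by abel, h2, neg_zero]
  refine ⟨-(J₀ * a) + (1/2 : ℝ) • (J₀ * (S * J₀)), ?_, ?_⟩
  · rw [Matrix.transpose_add, Matrix.transpose_neg, Matrix.transpose_mul, hJ₀,
      Matrix.transpose_smul, hT, Matrix.mul_neg, h3]
    module
  · rw [Matrix.mul_add, Matrix.mul_neg, Matrix.mul_smul,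
      ← Matrix.mul_assoc J₀ J₀ a, hJ₀2, ← Matrix.mul_assoc J₀ J₀ (S * J₀), hJ₀2,
      neg_one_mul, neg_one_mul]
    module

private lemma rev_dir {n : ℕ} (J₀ S R : Matrix (Fin n) (Fin n) ℝ)
    (hJ₀ : J₀ᵀ = -J₀) (hJ₀2 : J₀ * J₀ = -1) (hS : Sᵀ = -S) (hR : Rᵀ = R) :
    (J₀ * R + (1/2 : ℝ) • (S * J₀)) * J₀ +
      J₀ * (J₀ * R + (1/2 : ℝ) • (S * J₀))ᵀ + S = 0 := by
  have hta : (J₀ * R + (1/2 : ℝ) • (S * J₀))ᵀ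
      = -(R * J₀) + (1/2 : ℝ) • (J₀ * S) := by
    rw [Matrix.transpose_add, Matrix.transpose_mul, hJ₀, hR, Matrix.transpose_smul,
      Matrix.transpose_mul, hJ₀, hS]
    simp
  rw [hta, Matrix.mul_add, Matrix.add_mul, Matrix.mul_neg, Matrix.mul_smul,
    Matrix.smul_mul, Matrix.mul_assoc S J₀ J₀, hJ₀2, ← Matrix.mul_assoc J₀ J₀ S, hJ₀2,
    ← Matrix.mul_assoc J₀ R J₀]
  have e1 : S * (-1 : Matrix (Fin n) (Fin n) ℝ) = -S := by simp
  have e2 : (-1 : Matrix (Fin n) (Fin n) ℝ) * S = -S := by simp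
  rw [e1, e2]
  module

private lemma part2 {n : ℕ} (J₀ S R : Matrix (Fin n) (Fin n) ℝ)
    (hJ₀ : J₀ᵀ = -J₀) (hJ₀2 : J₀ * J₀ = -1) (hS : Sᵀ = -S) (hR : Rᵀ = R) :
    (J₀ * R) * J₀ + J₀ * (J₀ * R)ᵀ = 0 ∧
    ((1 / 2 : ℝ) • (S * J₀)) * J₀ - J₀ * ((1 / 2 : ℝ) • (S * J₀))ᵀ = 0 ∧
    ((J₀ * R)ᵀ * ((1 / 2 : ℝ) • (S * J₀))).trace = 0 := by
  have hT : (J₀ * (S * J₀))ᵀ = -(J₀ * (S * J₀)) := by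
    rw [Matrix.transpose_mul, Matrix.transpose_mul, hJ₀, hS]
    simp [Matrix.mul_assoc]
  refine ⟨?_, ?_, ?_⟩
  · rw [Matrix.transpose_mul, hJ₀, hR]
    simp [Matrix.mul_assoc]
  · rw [Matrix.transpose_smul, Matrix.transpose_mul, hJ₀, hS, Matrix.smul_mul,
      Matrix.mul_smul, Matrix.mul_assoc S J₀ J₀, hJ₀2]
    rw [show (-J₀ : Matrix (Fin n) (Fin n) ℝ) * -S = J₀ * S by simp,
      ← Matrix.mul_assoc J₀ J₀ S, hJ₀2]
    simp
  · rw [Matrix.transpose_mul, hJ₀, hR, Matrix.mul_neg, Matrix.neg_mul,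
      Matrix.trace_neg, Matrix.mul_smul, Matrix.trace_smul,
      show R * J₀ * (S * J₀) = R * (J₀ * (S * J₀)) by simp [Matrix.mul_assoc],
      trace_symm_anti R _ hR hT]
    simp

/-- For antisymmetric invertible `J₀` with `J₀² = -I` and antisymmetric `J`, the
general solution of `aJ₀ + J₀aᵀ + bJbᵀ = 0` is `a = J₀R + bJbᵀJ₀/2` with `R`
symmetric; moreover `J₀R` is Hamiltonian, `bJbᵀJ₀/2` is skew-Hamiltonian, and the
two summands are Frobenius-orthogonal. -/
theorem general_solution_PR1 {n m : ℕ}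
    (J₀ : Matrix (Fin n) (Fin n) ℝ) (hJ₀ : J₀ᵀ = -J₀) (hJ₀2 : J₀ * J₀ = -1)
    (J : Matrix (Fin m) (Fin m) ℝ) (hJ : Jᵀ = -J)
    (b : Matrix (Fin n) (Fin m) ℝ) :
    (∀ a : Matrix (Fin n) (Fin n) ℝ,
      a * J₀ + J₀ * aᵀ + b * J * bᵀ = 0 ↔
        ∃ R : Matrix (Fin n) (Fin n) ℝ, Rᵀ = R ∧
          a = J₀ * R + (1 / 2 : ℝ) • (b * J * bᵀ * J₀)) ∧
    (∀ R : Matrix (Fin n) (Fin n) ℝ, Rᵀ = R →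
      (J₀ * R) * J₀ + J₀ * (J₀ * R)ᵀ = 0 ∧
      ((1 / 2 : ℝ) • (b * J * bᵀ * J₀)) * J₀ -
          J₀ * ((1 / 2 : ℝ) • (b * J * bᵀ * J₀))ᵀ = 0 ∧
      ((J₀ * R)ᵀ * ((1 / 2 : ℝ) • (b * J * bᵀ * J₀))).trace = 0) := by
  have hS : (b * J * bᵀ)ᵀ = -(b * J * bᵀ) := by
    rw [Matrix.transpose_mul, Matrix.transpose_mul, Matrix.transpose_transpose, hJ]
    simp [Matrix.mul_assoc]
  refine ⟨fun a => ⟨fun h => ?_, ?_⟩, fun R hR => ?_⟩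
  · simpa [Matrix.mul_assoc] using fwd_dir J₀ (b * J * bᵀ) a hJ₀ hJ₀2 hS h
  · rintro ⟨R, hR, rfl⟩
    simpa [Matrix.mul_assoc] using rev_dir J₀ (b * J * bᵀ) R hJ₀ hJ₀2 hS hR
  · simpa [Matrix.mul_assoc] using part2 J₀ (b * J * bᵀ) R hJ₀ hJ₀2 hS hR
end

section
/- Let Q ≻ 0 be a symmetric positive definite n×n matrix, Φ an antisymmetric n×n matrix, and J₂ a canonical antisymmetric matrix (J₂² = -I). If the spectral radius of Δ := Q⁻¹Φ is less than 1, then the operator M(X) := ΦXJ₂ + QX on real n×m matrices is positive definite with respect to the Frobenius inner product. -/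
open Matrix

lemma aux_trace_posdef {n m : ℕ} {C : Matrix (Fin n) (Fin n) ℝ} (hC : C.PosDef)
    {Y : Matrix (Fin n) (Fin m) ℝ} (hY : Y ≠ 0) : 0 < (Yᵀ * (C * Y)).trace := by
  have key : ∀ j, (Yᵀ * (C * Y)) j j = (fun i => Y i j) ⬝ᵥ (C *ᵥ (fun i => Y i j)) := by
    intro j
    simp [Matrix.mul_apply, dotProduct, Matrix.mulVec, Finset.mul_sum, mul_comm]
  obtain ⟨i0, j0, hij⟩ : ∃ i j, Y i j ≠ 0 := by
    by_contra h; push_neg at h; exact hY (by ext i j; simpa using h i j)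
  rw [Matrix.trace]
  apply Finset.sum_pos'
  · intro j _
    have := hC.posSemidef.dotProduct_mulVec_nonneg (fun i => Y i j)
    simpa [key j, Matrix.diag] using this
  · refine ⟨j0, Finset.mem_univ _, ?_⟩
    have := hC.dotProduct_mulVec_pos (x := fun i => Y i j0) (by intro h; exact hij (congrFun h i0))
    simpa [key j0, Matrix.diag] using this

lemma aux_trace_sq_nonneg {n m : ℕ} (Z : Matrix (Fin n) (Fin m) ℝ) :
    0 ≤ (Zᵀ * Z).trace := by
  rw [Matrix.trace]
  apply Finset.sum_nonneg
  intro j _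
  simp only [Matrix.diag, Matrix.mul_apply, Matrix.transpose_apply]
  exact Finset.sum_nonneg fun i _ => mul_self_nonneg _

lemma aux_mem_spectrum_complex {k : ℕ} {M : Matrix (Fin k) (Fin k) ℝ} {μ : ℝ}
    (h : μ ∈ spectrum ℝ M) : (μ : ℂ) ∈ spectrum ℂ (M.map Complex.ofReal) := by
  rw [spectrum.mem_iff] at h ⊢
  rw [Matrix.isUnit_iff_isUnit_det] at h ⊢
  intro hu
  apply h
  have h1 : (algebraMap ℂ (Matrix (Fin k) (Fin k) ℂ)) (μ : ℂ) - M.map Complex.ofReal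
      = ((algebraMap ℝ (Matrix (Fin k) (Fin k) ℝ)) μ - M).map Complex.ofReal := by
    ext i j
    simp [Matrix.algebraMap_matrix_apply, apply_ite]
  have h2 : (((algebraMap ℝ (Matrix (Fin k) (Fin k) ℝ)) μ - M).map Complex.ofReal).det
      = Complex.ofReal (((algebraMap ℝ (Matrix (Fin k) (Fin k) ℝ)) μ - M).det) :=
    (RingHom.map_det Complex.ofRealHom _).symm
  rw [h1, h2] at hu
  have : ((algebraMap ℝ (Matrix (Fin k) (Fin k) ℝ)) μ - M).det ≠ 0 := by
    intro h0; rw [h0] at hu; simp at hu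
  exact this.isUnit

lemma aux_posdef_conj {k : ℕ} {U D : Matrix (Fin k) (Fin k) ℝ} (hD : D.PosDef) (hU : IsUnit U) :
    (U * D * star U).PosDef := by
  rw [Matrix.star_eq_conjTranspose]
  have hdet : IsUnit Uᴴ.det := by
    rw [Matrix.det_conjTranspose]
    exact ((Matrix.isUnit_iff_isUnit_det U).mp hU).star
  refine Matrix.PosDef.of_dotProduct_mulVec_pos ?_ ?_
  · exact Matrix.isHermitian_mul_mul_conjTranspose _ hD.isHermitian
  · intro x hx
    have hy : (Uᴴ *ᵥ x) ≠ 0 := by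
      intro h0
      have := congrArg (fun v => (Uᴴ)⁻¹ *ᵥ v) h0
      simp only [Matrix.mulVec_mulVec, Matrix.nonsing_inv_mul _ hdet, Matrix.one_mulVec,
        Matrix.mulVec_zero] at this
      exact hx this
    have key : star x ⬝ᵥ ((U * D * Uᴴ) *ᵥ x)
        = star (Uᴴ *ᵥ x) ⬝ᵥ (D *ᵥ (Uᴴ *ᵥ x)) := by
      rw [← Matrix.mulVec_mulVec, ← Matrix.mulVec_mulVec, Matrix.dotProduct_mulVec (star x),
        Matrix.star_mulVec, Matrix.conjTranspose_conjTranspose]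
    rw [key]
    exact hD.dotProduct_mulVec_pos hy

lemma aux_posdef_of_eigenvalues {k : ℕ} {C : Matrix (Fin k) (Fin k) ℝ} (hC : C.IsHermitian)
    (h : ∀ i, 0 < hC.eigenvalues i) : C.PosDef := by
  have hU : IsUnit (hC.eigenvectorUnitary : Matrix (Fin k) (Fin k) ℝ) :=
    ⟨⟨_, star (hC.eigenvectorUnitary : Matrix (Fin k) (Fin k) ℝ),
      (Matrix.mem_unitaryGroup_iff).mp hC.eigenvectorUnitary.2,
      (Matrix.mem_unitaryGroup_iff').mp hC.eigenvectorUnitary.2⟩, rfl⟩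
  rw [hC.spectral_theorem]
  have hD : (Matrix.diagonal (RCLike.ofReal ∘ hC.eigenvalues) : Matrix (Fin k) (Fin k) ℝ).PosDef :=
    Matrix.posDef_diagonal_iff.mpr (by intro i; simpa using h i)
  exact aux_posdef_conj hD hU

lemma aux_spectral_map {k : ℕ} (Ac : Matrix (Fin k) (Fin k) ℂ) (z : ℂ)
    (hz : z ∈ spectrum ℂ (1 + Ac * Ac)) : ∃ w ∈ spectrum ℂ Ac, z = 1 + w * w := by
  have hdeg : 0 < (1 + Polynomial.X ^ 2 : Polynomial ℂ).degree := by
    rw [add_comm]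
    simpa using Polynomial.degree_X_pow_add_C (n := 2) (by norm_num) (1 : ℂ) ▸
      (by norm_num : (0 : WithBot ℕ) < 2)
  have hmap := spectrum.map_polynomial_aeval_of_degree_pos Ac (1 + Polynomial.X ^ 2) hdeg
  have heq : Polynomial.aeval Ac (1 + Polynomial.X ^ 2 : Polynomial ℂ) = 1 + Ac * Ac := by
    simp [sq]
  rw [heq] at hmap
  rw [hmap] at hz
  obtain ⟨w, hw, hwz⟩ := hz
  exact ⟨w, hw, by simp [← hwz, sq]⟩

/-- Let `Q ≻ 0` symmetric, `Φ` antisymmetric, `J₂` canonical antisymmetric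
(`J₂² = -I`). If the spectral radius of `Δ := Q⁻¹Φ` is less than `1`, then the
operator `X ↦ ΦXJ₂ + QX` on real `n×m` matrices is positive definite w.r.t. the
Frobenius inner product. -/
theorem grade_two_posdef_of_spectral_radius_lt_one {n m : ℕ}
    (Q Φ : Matrix (Fin n) (Fin n) ℝ) (J₂ : Matrix (Fin m) (Fin m) ℝ)
    (hQ : Q.PosDef) (hΦ : Φᵀ = -Φ) (hJ₂ : J₂ᵀ = -J₂) (hJ₂2 : J₂ * J₂ = -1)
    (hr : ∀ l ∈ spectrum ℂ ((Q⁻¹ * Φ).map Complex.ofReal), ‖l‖ < 1) :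
    ∀ X : Matrix (Fin n) (Fin m) ℝ, X ≠ 0 →
      0 < (Xᵀ * (Φ * X * J₂ + Q * X)).trace := by
  intro X hX
  -- the square root of Q
  set S := (open scoped MatrixOrder in CFC.sqrt Q) with hSdef
  have hS1 : S * S = Q := (open scoped MatrixOrder in CFC.sqrt_mul_sqrt_self Q hQ.posSemidef.nonneg)
  have hSherm : S.IsHermitian := (open scoped MatrixOrder in (CFC.sqrt_nonneg Q).posSemidef.1)
  have hSsym : Sᵀ = S := by
    rw [← Matrix.conjTranspose_eq_transpose_of_trivial]; exact hSherm
  have hdetS : IsUnit S.det := by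
    refine isUnit_iff_ne_zero.mpr fun h0 => ?_
    have h2 : S.det * S.det = Q.det := by rw [← Matrix.det_mul, hS1]
    rw [h0, mul_zero] at h2
    exact hQ.det_pos.ne' h2.symm
  have hSS : S * S⁻¹ = 1 := Matrix.mul_nonsing_inv _ hdetS
  have hSS' : S⁻¹ * S = 1 := Matrix.nonsing_inv_mul _ hdetS
  -- cancellation lemmas
  have hcan : ∀ (p : ℕ) (Z : Matrix (Fin n) (Fin p) ℝ), S⁻¹ * (S * Z) = Z := by
    intro p Z; rw [← Matrix.mul_assoc, hSS', Matrix.one_mul]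
  have hcan' : ∀ (p : ℕ) (Z : Matrix (Fin n) (Fin p) ℝ), S * (S⁻¹ * Z) = Z := by
    intro p Z; rw [← Matrix.mul_assoc, hSS, Matrix.one_mul]
  set A := S⁻¹ * Φ * S⁻¹ with hAdef
  have hSinvsym : (S⁻¹)ᵀ = S⁻¹ := by rw [Matrix.transpose_nonsing_inv, hSsym]
  have hAT : Aᵀ = -A := by
    rw [hAdef, Matrix.transpose_mul, Matrix.transpose_mul, hSinvsym, hΦ]
    simp [Matrix.mul_assoc, Matrix.neg_mul, Matrix.mul_neg]
  -- similarity with Δ = Q⁻¹Φ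
  have hsimR : A * S = S * (Q⁻¹ * Φ) := by
    rw [hAdef, ← hS1, Matrix.mul_inv_rev]
    simp only [Matrix.mul_assoc]
    rw [hSS', Matrix.mul_one, hcan']
  -- complexify
  set Ac := A.map Complex.ofReal with hAcdef
  set Sc := S.map Complex.ofReal with hScdef
  set Δc := (Q⁻¹ * Φ).map Complex.ofReal with hΔcdef
  have hmapmul : ∀ (M N : Matrix (Fin n) (Fin n) ℝ),
      (M * N).map Complex.ofReal = M.map Complex.ofReal * N.map Complex.ofReal := by
    intro M N
    exact Matrix.map_mul (f := Complex.ofRealHom)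
  have hsimC : Ac * Sc = Sc * Δc := by
    rw [hAcdef, hScdef, hΔcdef, ← hmapmul, ← hmapmul, hsimR]
  have hdetSc : IsUnit Sc.det := by
    have : Sc.det = Complex.ofReal S.det := (RingHom.map_det Complex.ofRealHom S).symm
    rw [this]
    exact isUnit_iff_ne_zero.mpr (by
      simpa using isUnit_iff_ne_zero.mp hdetS)
  have hScc : Sc * Sc⁻¹ = 1 := Matrix.mul_nonsing_inv _ hdetSc
  obtain ⟨u, hu⟩ := (Matrix.isUnit_iff_isUnit_det Sc).mpr hdetSc
  have hAc_conj : Ac = (u : Matrix (Fin n) (Fin n) ℂ) * Δc *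
      ((u⁻¹ : (Matrix (Fin n) (Fin n) ℂ)ˣ) : Matrix (Fin n) (Fin n) ℂ) := by
    rw [Matrix.coe_units_inv, hu]
    calc Ac = Ac * (Sc * Sc⁻¹) := by rw [hScc, Matrix.mul_one]
    _ = (Ac * Sc) * Sc⁻¹ := by rw [Matrix.mul_assoc]
    _ = Sc * Δc * Sc⁻¹ := by rw [hsimC]
  have hspec : spectrum ℂ Ac = spectrum ℂ Δc := by
    rw [hAc_conj]; exact spectrum.units_conjugate
  -- the matrix C = 1 + A*A is positive definite
  set C := (1 : Matrix (Fin n) (Fin n) ℝ) + A * A with hCdef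
  have hCherm : C.IsHermitian := by
    rw [Matrix.IsHermitian, Matrix.conjTranspose_eq_transpose_of_trivial, hCdef,
      Matrix.transpose_add, Matrix.transpose_one, Matrix.transpose_mul, hAT]
    simp
  have hCmap : C.map Complex.ofReal = 1 + Ac * Ac := by
    rw [hCdef]
    ext i j
    simp [hAcdef, Matrix.map_apply, Matrix.one_apply, Matrix.mul_apply, apply_ite]
  have heig : ∀ i, 0 < hCherm.eigenvalues i := by
    intro i
    have h1 : hCherm.eigenvalues i ∈ spectrum ℝ C := hCherm.eigenvalues_mem_spectrum_real i
    have h2 : ((hCherm.eigenvalues i : ℝ) : ℂ) ∈ spectrum ℂ (C.map Complex.ofReal) :=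
      aux_mem_spectrum_complex h1
    rw [hCmap] at h2
    obtain ⟨w, hw, hwz⟩ := aux_spectral_map Ac _ h2
    rw [hspec] at hw
    have habs : ‖w‖ < 1 := hr w hw
    have hre := congrArg Complex.re hwz
    simp only [Complex.add_re, Complex.one_re, Complex.mul_re] at hre
    have him2 : w.im * w.im < 1 := by
      have h3 : w.re * w.re + w.im * w.im < 1 := by
        have := Complex.sq_norm w
        have h4 : ‖w‖ ^ 2 < 1 := by nlinarith [norm_nonneg w]
        rw [Complex.sq_norm, Complex.normSq_apply] at h4
        exact h4
      nlinarith [mul_self_nonneg w.re]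
    have hre' : hCherm.eigenvalues i = 1 + (w.re * w.re - w.im * w.im) := by
      simpa using hre
    rw [hre']
    nlinarith [mul_self_nonneg w.re]
  have hCpos : C.PosDef := aux_posdef_of_eigenvalues hCherm heig
  -- set Y = S X
  set Y := S * X with hYdef
  have hY : Y ≠ 0 := by
    intro h0
    apply hX
    have := congrArg (fun Z => S⁻¹ * Z) h0
    simpa [hYdef, hcan] using this
  -- the two trace identities
  have h1 : Xᵀ * (Q * X) = Yᵀ * Y := by
    rw [hYdef, Matrix.transpose_mul, hSsym, ← hS1]
    simp only [Matrix.mul_assoc]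
  have h2 : Xᵀ * (Φ * X * J₂) = Yᵀ * (A * Y * J₂) := by
    rw [hYdef, hAdef, Matrix.transpose_mul, hSsym]
    simp only [Matrix.mul_assoc]
    rw [hcan, hcan']
  -- abbreviations
  set T := (Yᵀ * (A * Y * J₂)).trace with hT
  set P := (Yᵀ * Y).trace with hP
  -- rewrite the goal
  have hgoal : (Xᵀ * (Φ * X * J₂ + Q * X)).trace = T + P := by
    rw [Matrix.mul_add, Matrix.trace_add, h1, h2]
  rw [hgoal]
  -- the key positive quantity
  have hCtrace : 0 < (Yᵀ * (C * Y)).trace := aux_trace_posdef hCpos hY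
  have hCtr_eq : (Yᵀ * (C * Y)).trace = P + (Yᵀ * (A * (A * Y))).trace := by
    rw [hCdef, Matrix.add_mul, Matrix.mul_add, Matrix.trace_add, Matrix.one_mul]
    simp only [Matrix.mul_assoc, ← hP]
  -- the square expansion
  set W := A * Y * J₂ with hW
  have hWTY : (Wᵀ * Y).trace = T := by
    rw [← Matrix.trace_transpose, Matrix.transpose_mul, Matrix.transpose_transpose, hT]
  have hJJ : J₂ * J₂ᵀ = 1 := by
    rw [hJ₂, Matrix.mul_neg, hJ₂2]; simp
  have hWTW : (Wᵀ * W).trace = -(Yᵀ * (A * (A * Y))).trace := by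
    have e1 : Wᵀ * W = J₂ᵀ * ((A * Y)ᵀ * (A * Y) * J₂) := by
      rw [hW, Matrix.transpose_mul]
      simp only [Matrix.mul_assoc]
    rw [e1, Matrix.trace_mul_comm, Matrix.mul_assoc, Matrix.mul_assoc, hJJ, Matrix.mul_one,
      Matrix.transpose_mul, hAT]
    simp only [Matrix.neg_mul, Matrix.mul_neg, Matrix.trace_neg, Matrix.mul_assoc]
  have hZ : 0 ≤ ((Y + W)ᵀ * (Y + W)).trace := aux_trace_sq_nonneg _
  have hZexp : ((Y + W)ᵀ * (Y + W)).trace = P + 2 * T - (Yᵀ * (A * (A * Y))).trace := by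
    rw [Matrix.transpose_add, Matrix.add_mul, Matrix.mul_add, Matrix.mul_add,
      Matrix.trace_add, Matrix.trace_add, Matrix.trace_add, hWTY, hWTW]
    rw [hT, hP]
    ring
  rw [hZexp] at hZ
  rw [hCtr_eq] at hCtrace
  linarith
end
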